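/- arXiv:2205.06715 — 2 statements merged into one kernel-verified Lean document; each statement's English description precedes it below -/
import Mathlib

section
/- Let $\mathcal{P}$ be a finite collection of unit cells in $\mathbb{Z}^2$, and for each cell $C = [a, a+(1,1)]$ with anti-diagonal corners $c = a+(1,0)$ and $d = a+(0,1)$, define the vector $v_C = e_a + e_{a+(1,1)} - e_c - e_d$ in the free $\mathbb{Q}$-vector space $\mathbb{Q}^{V(\mathcal{P})}$ on the vertex set of $\mathcal{P}$. Then the vectors $\{v_C : C \in \mathcal{P}\}$ are linearly independent over $\mathbb{Q}$. -/
/-!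
In the group algebra `ℚ[ℤ²] = ℚ[x^±1, y^±1]` the cell vector of `a` is the monomial `x^a` times
the fixed element `(1 - x)(1 - y)`, the cell vector of the origin. Since `ℚ[ℤ²]` is a domain,
multiplication by this nonzero element is injective, so it carries the linearly independent
monomials to linearly independent cell vectors.
-/

/-- The vector `e_a + e_{a+(1,1)} - e_{a+(1,0)} - e_{a+(0,1)}` attached to the
cell with lower-left corner `a`. -/
noncomputable def cellVector (a : ℤ × ℤ) : (ℤ × ℤ) →₀ ℚ :=
  Finsupp.single a 1 + Finsupp.single (a + (1, 1)) 1
    - Finsupp.single (a + (1, 0)) 1 - Finsupp.single (a + (0, 1)) 1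

namespace AddMonoidAlgebra

theorem linearIndependent_single_one_mul {k G : Type*} [CommSemiring k] [AddMonoid G]
    [IsRightCancelMulZero (AddMonoidAlgebra k G)] {f : AddMonoidAlgebra k G} (hf : f ≠ 0) :
    LinearIndependent k (fun a : G => single a 1 * f) :=
  (basis G k).linearIndependent.map_injOn (LinearMap.mulRight k f)
    fun _ _ _ _ h => mul_right_cancel₀ hf h

end AddMonoidAlgebra

open AddMonoidAlgebra

theorem ofCoeff_cellVector (a : ℤ × ℤ) :
    ofCoeff (cellVector a) = single a 1 * ofCoeff (cellVector 0) := by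
  simp only [cellVector, ofCoeff_sub, ofCoeff_add, ofCoeff_single, mul_sub, mul_add,
    single_mul_single, mul_one, zero_add, add_zero]

theorem cellVector_zero_ne_zero : cellVector 0 ≠ 0 := by
  intro h
  simpa [cellVector, Finsupp.single_apply] using DFunLike.congr_fun h 0

theorem linearIndependent_cellVector : LinearIndependent ℚ cellVector := by
  have h := linearIndependent_single_one_mul (ofCoeff_injective.ne cellVector_zero_ne_zero)
  simp only [← ofCoeff_cellVector] at h
  exact h.map' (coeffLinearEquiv ℚ).toLinearMap (coeffLinearEquiv ℚ).ker

theorem cellVectors_linearIndependent (P : Finset (ℤ × ℤ)) :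
    LinearIndependent ℚ (fun a : P => cellVector a) :=
  linearIndependent_cellVector.comp _ Subtype.val_injective
end

section
/- Let $G$ be a finite simple graph on vertex set $[n]$ with $c$ connected components, and let $J_G \subset K[x_1,\ldots,x_n,y_1,\ldots,y_n]$ be its binomial edge ideal, generated by $x_i y_j - x_j y_i$ for edges $\{i,j\}$ with $i < j$. Let $V_{J_G} \subseteq \mathbb{Q}^{2n}$ be the $\mathbb{Q}$-span of the vectors $v - w$ such that $x^v - x^w \in J_G$ (with $x^v$ monomials in all $2n$ variables). Then $\dim_{\mathbb{Q}} V_{J_G} = n - c$. -/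
open MvPolynomial

/-- The binomial edge ideal of a graph `G` on `n` vertices, in
`K[x_1,…,x_n,y_1,…,y_n]`; the `x`-variables are indexed by `Sum.inl`, the
`y`-variables by `Sum.inr`. -/
noncomputable def binomialEdgeIdeal (K : Type*) [Field K] {n : ℕ}
    (G : SimpleGraph (Fin n)) : Ideal (MvPolynomial (Fin n ⊕ Fin n) K) :=
  Ideal.span {f | ∃ i j : Fin n, G.Adj i j ∧
    f = X (Sum.inl i) * X (Sum.inr j) - X (Sum.inl j) * X (Sum.inr i)}

/-- The `ℚ`-vector space spanned by the exponent-difference vectors of the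
binomials contained in an ideal of a polynomial ring. -/
noncomputable def binomialVectorSpace {K : Type*} [Field K] {σ : Type*}
    (I : Ideal (MvPolynomial σ K)) : Submodule ℚ (σ → ℚ) :=
  Submodule.span ℚ {u : σ → ℚ | ∃ v w : σ →₀ ℕ,
    monomial v (1 : K) - monomial w 1 ∈ I ∧ u = fun i => (v i : ℚ) - (w i : ℚ)}

/-!
The binomial edge ideal lies in the kernel of two renamings of the variables:
`x_i, y_i ↦ t_i`, and `x_i ↦ u_C, y_i ↦ w_C` with `C` the component of `i`. A binomial
`x^v - x^w` in that kernel has `v - w` in the kernel of the induced summation over fibres, so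
`V_{J_G}` lies in `{(z, -z) | z sums to zero over each component}`, a space of dimension `n - c`.
Conversely the generator of an edge `{i, j}` gives `(e_i - e_j, e_j - e_i)`, and chaining these
along walks yields `(e_i - e_{r(i)}, e_{r(i)} - e_i)` for a representative `r(i)` of the
component of `i`; these span the whole space.
-/

section FiberSum

open Finset

variable {R σ σ' τ : Type*} [Fintype σ] [Fintype σ'] [DecidableEq τ]

section Semiring

variable (R) [Semiring R]

def fiberSum (f : σ → τ) : (σ → R) →ₗ[R] (τ → R) where
  toFun u t := ∑ s with f s = t, u s
  map_add' u u' := by ext t; simp [sum_add_distrib]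
  map_smul' c u := by ext t; simp [mul_sum]

variable {R}

theorem fiberSum_apply (f : σ → τ) (u : σ → R) (t : τ) :
    fiberSum R f u t = ∑ s with f s = t, u s := rfl

theorem fiberSum_id [Fintype τ] (u : τ → R) : fiberSum R id u = u := by
  ext t; simp [fiberSum_apply, filter_eq']

theorem fiberSum_single [DecidableEq σ] (f : σ → τ) (s : σ) (a : R) :
    fiberSum R f (Pi.single s a) = Pi.single (f s) a := by
  ext t
  rw [fiberSum_apply, sum_filter, sum_eq_single s] <;> simp +contextual [Pi.single_apply, eq_comm]

theorem fiberSum_natCast_eq_mapDomain (f : σ → τ) (v : σ →₀ ℕ) (t : τ) :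
    fiberSum R f (fun s => (v s : R)) t = v.mapDomain f t := by
  simp [Finsupp.mapDomain, Finsupp.sum_fintype, Finsupp.single_apply, fiberSum_apply, sum_filter]

theorem fiberSum_sumElim (f : σ → τ) (g : σ' → τ) (a : σ → R) (b : σ' → R) :
    fiberSum R (Sum.elim f g) (Sum.elim a b) = fiberSum R f a + fiberSum R g b := by
  ext t
  simp only [fiberSum_apply, sum_filter, Fintype.sum_sum_type, Sum.elim_inl, Sum.elim_inr,
    Pi.add_apply]
  rfl

theorem fiberSum_sumMap {τ' : Type*} [DecidableEq τ'] (f : σ → τ) (g : σ' → τ')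
    (a : σ → R) (b : σ' → R) :
    fiberSum R (Sum.map f g) (Sum.elim a b) = Sum.elim (fiberSum R f a) (fiberSum R g b) := by
  ext (t | t) <;> simp [fiberSum_apply, sum_filter, Fintype.sum_sum_type]

theorem fiberSum_surjective [Fintype τ] [DecidableEq σ] {f : σ → τ}
    (hf : Function.Surjective f) : Function.Surjective (fiberSum R f) := by
  intro u
  refine ⟨∑ t, Pi.single (Function.surjInv hf t) (u t), ?_⟩
  simp [map_sum, fiberSum_single, Function.surjInv_eq, univ_sum_single]

end Semiring

theorem finrank_ker_fiberSum [Field R] [Fintype τ] {f : σ → τ} (hf : Function.Surjective f) :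
    Module.finrank R (LinearMap.ker (fiberSum R f)) = Fintype.card σ - Fintype.card τ := by
  classical
  have := LinearMap.finrank_range_add_finrank_ker (fiberSum R f)
  rw [LinearMap.range_eq_top.mpr (fiberSum_surjective hf), finrank_top] at this
  simp only [Module.finrank_fintype_fun_eq_card] at this
  omega

theorem mem_span_single_sub_single_of_fiberSum_eq_zero [Ring R] [Fintype τ] [DecidableEq σ]
    (f : σ → τ) (r : τ → σ) {z : σ → R} (hz : fiberSum R f z = 0) :
    z ∈ Submodule.span R (Set.range fun s => Pi.single s 1 - Pi.single (r (f s)) 1) := by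
  have hsplit : ∑ s, z s • Pi.single (r (f s)) (1 : R) = 0 := by
    rw [← sum_fiberwise univ f]
    refine sum_eq_zero fun t _ => ?_
    rw [sum_congr rfl fun s hs => by rw [(mem_filter.mp hs).2], ← sum_smul, ← fiberSum_apply,
      hz, Pi.zero_apply, zero_smul]
  have hz' : z = ∑ s, z s • (Pi.single s 1 - Pi.single (r (f s)) 1) := by
    simp_rw [smul_sub, sum_sub_distrib, hsplit, sub_zero]
    exact pi_eq_sum_univ' z
  rw [hz']
  exact Submodule.sum_mem _ fun s _ => Submodule.smul_mem _ _ (Submodule.subset_span ⟨s, rfl⟩)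

end FiberSum

section SumElimNeg

variable (R : Type*) [Ring R] {ι : Type*}

def sumElimNeg : (ι → R) →ₗ[R] (ι ⊕ ι → R) where
  toFun z := Sum.elim z (-z)
  map_add' z z' := by ext (i | i) <;> simp [add_comm]
  map_smul' c z := by ext (i | i) <;> simp

variable {R}

theorem sumElimNeg_apply (z : ι → R) : sumElimNeg R z = Sum.elim z (-z) := rfl

theorem sumElimNeg_injective : Function.Injective (sumElimNeg R (ι := ι)) :=
  fun _ _ h => funext fun i => congrFun h (Sum.inl i)

theorem sumElimNeg_single [DecidableEq ι] (i : ι) :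
    sumElimNeg R (Pi.single i 1) = Pi.single (Sum.inl i) 1 - Pi.single (Sum.inr i) 1 := by
  ext (j | j) <;> simp [sumElimNeg_apply, Pi.single_apply]

theorem ker_fiberSum_sumElim_id_le_range [Fintype ι] [DecidableEq ι] :
    LinearMap.ker (fiberSum R (Sum.elim id id : ι ⊕ ι → ι)) ≤
      LinearMap.range (sumElimNeg R) := by
  intro u hu
  have hneg : -(u ∘ Sum.inl) = u ∘ Sum.inr := by
    rwa [LinearMap.mem_ker, ← Sum.elim_comp_inl_inr u, fiberSum_sumElim, fiberSum_id, fiberSum_id,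
      add_eq_zero_iff_neg_eq] at hu
  exact ⟨u ∘ Sum.inl, by rw [sumElimNeg_apply, hneg, Sum.elim_comp_inl_inr]⟩

theorem fiberSum_sumMap_sumElimNeg [Fintype ι] {τ : Type*} [DecidableEq τ] (f : ι → τ)
    (z : ι → R) : fiberSum R (Sum.map f f) (sumElimNeg R z) = sumElimNeg R (fiberSum R f z) := by
  rw [sumElimNeg_apply, fiberSum_sumMap, map_neg, sumElimNeg_apply]

theorem ker_fiberSum_sumElim_id_inf_ker_fiberSum_sumMap_le [Fintype ι] [DecidableEq ι]
    {τ : Type*} [DecidableEq τ] (f : ι → τ) :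
    LinearMap.ker (fiberSum R (Sum.elim id id : ι ⊕ ι → ι)) ⊓
        LinearMap.ker (fiberSum R (Sum.map f f)) ≤
      (LinearMap.ker (fiberSum R f)).map (sumElimNeg R) := by
  rintro u ⟨hu, hfu⟩
  obtain ⟨z, rfl⟩ := ker_fiberSum_sumElim_id_le_range hu
  refine ⟨z, ?_, rfl⟩
  rw [SetLike.mem_coe, LinearMap.mem_ker, fiberSum_sumMap_sumElimNeg] at hfu
  exact sumElimNeg_injective (hfu.trans (map_zero _).symm)

end SumElimNeg

section BinomialVectorSpace

variable {K : Type*} [Field K] {σ τ : Type*} [Fintype σ] [DecidableEq τ]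

theorem binomialVectorSpace_le_ker_fiberSum {I : Ideal (MvPolynomial σ K)} (f : σ → τ)
    (hI : I ≤ RingHom.ker (rename f)) :
    binomialVectorSpace I ≤ LinearMap.ker (fiberSum ℚ f) := by
  rw [binomialVectorSpace, Submodule.span_le]
  rintro _ ⟨v, w, hvw, rfl⟩
  have hmap : v.mapDomain f = w.mapDomain f := by
    have := hI hvw
    rwa [RingHom.mem_ker, map_sub, rename_monomial, rename_monomial, sub_eq_zero,
      monomial_left_inj one_ne_zero] at this
  ext t
  change fiberSum ℚ f ((fun s => (v s : ℚ)) - fun s => (w s : ℚ)) t = 0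
  rw [map_sub, Pi.sub_apply, fiberSum_natCast_eq_mapDomain, fiberSum_natCast_eq_mapDomain, hmap,
    sub_self]

end BinomialVectorSpace

theorem SimpleGraph.connectedComponentMk_surjective {V : Type*} (G : SimpleGraph V) :
    Function.Surjective G.connectedComponentMk :=
  Quot.mk_surjective

section BinomialEdgeIdeal

open Sum

variable (K : Type*) [Field K] {n : ℕ} (G : SimpleGraph (Fin n))

theorem binomialEdgeIdeal_le_ker_rename {τ : Type*} (g : Fin n ⊕ Fin n → τ)
    (hg : ∀ i j, G.Adj i j →
      (X (g (inl i)) * X (g (inr j)) : MvPolynomial τ K) = X (g (inl j)) * X (g (inr i))) :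
    binomialEdgeIdeal K G ≤ RingHom.ker (rename g) := by
  rw [binomialEdgeIdeal, Ideal.span_le]
  rintro _ ⟨i, j, hij, rfl⟩
  simp [hg i j hij]

theorem binomialVectorSpace_binomialEdgeIdeal_le [DecidableEq G.ConnectedComponent] :
    binomialVectorSpace (binomialEdgeIdeal K G) ≤
      (LinearMap.ker (fiberSum ℚ G.connectedComponentMk)).map (sumElimNeg ℚ) := by
  refine le_trans (le_inf ?_ ?_) (ker_fiberSum_sumElim_id_inf_ker_fiberSum_sumMap_le _)
  · exact binomialVectorSpace_le_ker_fiberSum _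
      (binomialEdgeIdeal_le_ker_rename K G _ fun i j _ => by simp [mul_comm])
  · exact binomialVectorSpace_le_ker_fiberSum _
      (binomialEdgeIdeal_le_ker_rename K G _ fun i j hij => by
        simp [SimpleGraph.ConnectedComponent.sound hij.reachable])

theorem sumElimNeg_single_sub_single_mem_of_adj {i j : Fin n} (hij : G.Adj i j) :
    sumElimNeg ℚ (Pi.single i 1 - Pi.single j 1) ∈
      binomialVectorSpace (binomialEdgeIdeal K G) := by
  refine Submodule.subset_span ⟨Finsupp.single (inl i) 1 + Finsupp.single (inr j) 1,
    Finsupp.single (inl j) 1 + Finsupp.single (inr i) 1,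
    Ideal.subset_span ⟨i, j, hij, ?_⟩, ?_⟩
  · simp [← X_pow_eq_monomial, monomial_single_add]
  · rw [map_sub, sumElimNeg_single, sumElimNeg_single]
    ext a
    simp only [Finsupp.single_apply, Pi.single_apply, eq_comm (a := a), Finsupp.add_apply,
      Nat.cast_add, Nat.cast_ite, Nat.cast_one, Nat.cast_zero, Pi.sub_apply]
    ring

theorem sumElimNeg_single_sub_single_mem_of_reachable {i j : Fin n} (h : G.Reachable i j) :
    sumElimNeg ℚ (Pi.single i 1 - Pi.single j 1) ∈
      binomialVectorSpace (binomialEdgeIdeal K G) := by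
  obtain ⟨p⟩ := h
  induction p with
  | nil => simp
  | cons hadj _ ih =>
    rw [← sub_add_sub_cancel _ (Pi.single _ 1) _, map_add]
    exact add_mem (sumElimNeg_single_sub_single_mem_of_adj K G hadj) ih

theorem map_ker_fiberSum_le_binomialVectorSpace [Fintype G.ConnectedComponent]
    [DecidableEq G.ConnectedComponent] :
    (LinearMap.ker (fiberSum ℚ G.connectedComponentMk)).map (sumElimNeg ℚ) ≤
      binomialVectorSpace (binomialEdgeIdeal K G) := by
  rw [Submodule.map_le_iff_le_comap]
  intro z hz
  have hsurj := G.connectedComponentMk_surjective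
  refine Submodule.span_le.mpr ?_
    (mem_span_single_sub_single_of_fiberSum_eq_zero _ (Function.surjInv hsurj) hz)
  rintro _ ⟨i, rfl⟩
  exact sumElimNeg_single_sub_single_mem_of_reachable K G
    (SimpleGraph.ConnectedComponent.exact (Function.surjInv_eq hsurj _).symm)

theorem binomialVectorSpace_binomialEdgeIdeal [Fintype G.ConnectedComponent]
    [DecidableEq G.ConnectedComponent] :
    binomialVectorSpace (binomialEdgeIdeal K G) =
      (LinearMap.ker (fiberSum ℚ G.connectedComponentMk)).map (sumElimNeg ℚ) :=
  le_antisymm (binomialVectorSpace_binomialEdgeIdeal_le K G)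
    (map_ker_fiberSum_le_binomialVectorSpace K G)

end BinomialEdgeIdeal

theorem dim_binomialVectorSpace_binomialEdgeIdeal (K : Type*) [Field K] {n : ℕ}
    (G : SimpleGraph (Fin n)) :
    Module.finrank ℚ (binomialVectorSpace (binomialEdgeIdeal K G))
      = n - Nat.card G.ConnectedComponent := by
  classical
  rw [binomialVectorSpace_binomialEdgeIdeal K G,
    ← (Submodule.equivMapOfInjective _ sumElimNeg_injective _).finrank_eq,
    finrank_ker_fiberSum G.connectedComponentMk_surjective, Fintype.card_fin,
    Nat.card_eq_fintype_card]
end
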